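/- arXiv:2403.09248 — 2 statements merged into one kernel-verified Lean document; each statement's English description precedes it below -/
import Mathlib

section
/- Fix an integer k ≥ 1, and let (p_n) be a sequence in (0,1] with 1 − p_n = O(ln(n)/n) (i.e., there is a constant C with 1 − p_n ≤ C·ln(n)/n for all sufficiently large n). For each n let μ_n = μ_{n,p_n} be the Erdős–Rényi measure. Then lim_{n→∞} E_{μ_n}[β_{k,k}(G_ω)] / (n^{k+1}·p_n^{2k−1}) = 1, where β_{k,k}(G) is the rank of EMH_{k,k}(G). -/
open scoped Classical

variable {V : Type*}

/-- Length of the walk described by a list of landmarks: sum of path-metric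
distances between consecutive entries (`⊤`-valued if some pair is unreachable). -/
noncomputable def mlen (G : SimpleGraph V) : List V → ℕ∞
  | [] => 0
  | [_] => 0
  | a :: b :: t => G.edist a b + mlen G (b :: t)

/-- A list of landmarks is a trail if consecutive entries are distinct and reachable. -/
def IsTrailList (G : SimpleGraph V) (l : List V) : Prop :=
  l.Chain' fun a b => a ≠ b ∧ G.Reachable a b

/-- `trails G k ℓ` is the set `T_{k,ℓ}(G)` of `k`-trails of length `ℓ`,
encoded as lists with `k+1` entries. -/
def trails (G : SimpleGraph V) (k ℓ : ℕ) : Set (List V) :=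
  {l | l.length = k + 1 ∧ IsTrailList G l ∧ mlen G l = (ℓ : ℕ∞)}

/-- `etrails G k ℓ` is the set `ET_{k,ℓ}(G)` of eulerian `k`-trails of length `ℓ`. -/
def etrails (G : SimpleGraph V) (k ℓ : ℕ) : Set (List V) :=
  {l | l ∈ trails G k ℓ ∧ l.Nodup}

/-- Boundary of a single generator: `∂_{·,ℓ}(x₀,…,x_k) = Σ_{i=1}^{k-1} (-1)^i ∂^i`,
where `∂^i` deletes the `i`-th landmark if this does not change the length. -/
noncomputable def bdryElt (G : SimpleGraph V) (ℓ : ℕ) (l : List V) : List V →₀ ℤ :=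
  ∑ i ∈ Finset.Ioo 0 (l.length - 1),
    if mlen G (l.eraseIdx i) = (ℓ : ℕ∞) then ((-1 : ℤ) ^ i) • Finsupp.single (l.eraseIdx i) 1
    else 0

/-- The magnitude differential (length parameter `ℓ`) on the ambient free abelian group
on all landmark lists.  Its restriction to `MC_{k,ℓ}(G)` (chains supported on
`trails G k ℓ`) is `∂_{k,ℓ}`. -/
noncomputable def bdry (G : SimpleGraph V) (ℓ : ℕ) : (List V →₀ ℤ) →ₗ[ℤ] (List V →₀ ℤ) :=
  Finsupp.lsum ℤ fun l => LinearMap.toSpanSingleton ℤ _ (bdryElt G ℓ l)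

/-- `MC_{k,ℓ}(G)`: the free abelian group on `T_{k,ℓ}(G)`, realized as the submodule of
finitely supported `ℤ`-valued functions supported on trails. -/
noncomputable def MC (G : SimpleGraph V) (k ℓ : ℕ) : Submodule ℤ (List V →₀ ℤ) :=
  Finsupp.supported ℤ ℤ (trails G k ℓ)

/-- `EMC_{k,ℓ}(G)`: the free abelian group on `ET_{k,ℓ}(G)`. -/
noncomputable def EMC (G : SimpleGraph V) (k ℓ : ℕ) : Submodule ℤ (List V →₀ ℤ) :=
  Finsupp.supported ℤ ℤ (etrails G k ℓ)

/-- `EMH_{k,k}(G) = ker(∂_{k,k}|_{EMC_{k,k}(G)})`, the first-diagonal eulerian magnitude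
homology group (`EMC_{k+1,k}(G) = 0`, so homology is just the kernel). -/
noncomputable def EMHkk (G : SimpleGraph V) (k : ℕ) : Submodule ℤ (List V →₀ ℤ) :=
  EMC G k k ⊓ LinearMap.ker (bdry G k)

/-- `MH_{k,k}(G) = ker(∂_{k,k}|_{MC_{k,k}(G)})`. -/
noncomputable def MHkk (G : SimpleGraph V) (k : ℕ) : Submodule ℤ (List V →₀ ℤ) :=
  MC G k k ⊓ LinearMap.ker (bdry G k)

/-- `β_{k,k}(G)`, the rank of `EMH_{k,k}(G)`. -/
noncomputable def emBetti (G : SimpleGraph V) (k : ℕ) : ℕ :=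
  Module.finrank ℤ (EMHkk G k)

/-- `c(G,H)`: the number of vertex subsets of `G` whose induced subgraph is isomorphic
to `H`. -/
noncomputable def subgraphCount (G : SimpleGraph V) {W : Type*} (H : SimpleGraph W) : ℕ :=
  Set.ncard {s : Set V | Nonempty ((G.induce s) ≃g H)}

open MeasureTheory
open scoped ENNReal

/-- The Erdős–Rényi measure `μ_{n,p}` on `Ω_n`, the space of `{0,1}`-labellings of the
(unordered) pairs of vertices of `{1,…,n}`: each coordinate is an independent
Bernoulli(`p`) variable. -/
noncomputable def erMeasure (n : ℕ) (p : ℝ≥0∞) (hp : p ≤ 1) :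
    Measure (Sym2 (Fin n) → Bool) :=
  Measure.pi fun _ => (PMF.ofFintype (fun b => cond b p (1 - p)) (by simp [hp])).toMeasure

/-- The simple graph `G_ω` determined by `ω ∈ Ω_n`: distinct `u, v` are adjacent iff
`ω({u,v}) = 1`. -/
def erGraph {n : ℕ} (ω : Sym2 (Fin n) → Bool) : SimpleGraph (Fin n) :=
  SimpleGraph.fromRel fun u v => ω s(u, v) = true

/-!
A `k`-trail of length `k` has `k` steps of length at least one, so it is a walk along edges:
`ET_{k,k}(G)` is the set of labelled paths on `k + 1` vertices, and `β_{k,k}(G)` is at most the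
number of labelled copies of the path `P_{k+1}`. Conversely, if `x_{i}` and `x_{i+2}` are adjacent
as well (a copy of the square of `P_{k+1}`), deleting any interior landmark leaves a walk of
length `k - 1`, so every face vanishes and the trail is a cycle; distinct such generators are
independent. In `G(n,p)` a graph on `v` vertices with `e` edges has `(n)_v p^e` expected labelled
copies; `P_{k+1}` has `k` edges and its square `2k - 1`, whence
`(n)_{k+1} p^{2k-1} ≤ E β_{k,k} ≤ (n)_{k+1} p^k`, and both bounds are `~ n^{k+1} p_n^{2k-1}`
because `p_n → 1`.
-/

namespace SimpleGraph

def distGraph (m d : ℕ) : SimpleGraph (Fin m) := fromRel fun i j => i.val + d = j.val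

def pathSquareGraph (m : ℕ) : SimpleGraph (Fin m) := distGraph m 1 ⊔ distGraph m 2

lemma distGraph_adj {m d : ℕ} {u v : Fin m} :
    (distGraph m d).Adj u v ↔ u ≠ v ∧ (u.val + d = v.val ∨ v.val + d = u.val) :=
  fromRel_adj _ _ _

lemma pathSquareGraph_adj {m : ℕ} {u v : Fin m} :
    (pathSquareGraph m).Adj u v ↔ u ≠ v ∧ u.val ≤ v.val + 2 ∧ v.val ≤ u.val + 2 := by
  rw [pathSquareGraph, sup_adj, distGraph_adj, distGraph_adj, ne_eq, Fin.ext_iff]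
  omega

lemma pathGraph_eq_distGraph_one (m : ℕ) : pathGraph m = distGraph m 1 := by
  ext u v
  rw [pathGraph_adj, distGraph_adj, ne_eq, Fin.ext_iff]
  omega

lemma ncard_edgeSet_distGraph {m d : ℕ} (hd : 0 < d) :
    (distGraph m d).edgeSet.ncard = m - d := by
  let e : Fin (m - d) → Sym2 (Fin m) := fun i => s(⟨i, by omega⟩, ⟨i + d, by omega⟩)
  have he : e.Injective := fun i j h => by
    rcases Sym2.eq_iff.mp h with ⟨h1, -⟩ | ⟨h1, h2⟩ <;> simp only [Fin.ext_iff] at * <;> omega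
  have hrange : (distGraph m d).edgeSet = Set.range e := by
    ext x
    induction x using Sym2.ind with | _ a b => ?_
    simp only [mem_edgeSet, distGraph_adj, Set.mem_range, e, Sym2.eq_iff, Fin.ext_iff, ne_eq]
    constructor
    · rintro ⟨-, h | h⟩
      exacts [⟨⟨a, by omega⟩, Or.inl ⟨rfl, h⟩⟩, ⟨⟨b, by omega⟩, Or.inr ⟨rfl, h⟩⟩]
    · rintro ⟨i, h | h⟩ <;> omega
  rw [hrange, Set.ncard_range_of_injective he, Nat.card_eq_fintype_card, Fintype.card_fin]

lemma ncard_edgeSet_pathGraph (k : ℕ) : (pathGraph (k + 1)).edgeSet.ncard = k := by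
  rw [pathGraph_eq_distGraph_one, ncard_edgeSet_distGraph one_pos, Nat.add_sub_cancel]

lemma ncard_edgeSet_pathSquareGraph (k : ℕ) :
    (pathSquareGraph (k + 1)).edgeSet.ncard = 2 * k - 1 := by
  have hdisj : Disjoint (distGraph (k + 1) 1).edgeSet (distGraph (k + 1) 2).edgeSet := by
    rw [disjoint_edgeSet, disjoint_iff_inf_le]
    intro u v ⟨h1, h2⟩
    rw [distGraph_adj] at h1 h2
    omega
  rw [pathSquareGraph, edgeSet_sup, Set.ncard_union_eq hdisj, ncard_edgeSet_distGraph one_pos,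
    ncard_edgeSet_distGraph two_pos]
  omega

section LabelledCopyCount
open Finset

variable {W : Type*} [Fintype V] [Fintype W] {G : SimpleGraph V}

lemma labelledCopyCount_eq_natCard (H : SimpleGraph W) :
    G.labelledCopyCount H = Nat.card (H.Copy G) := by
  rw [labelledCopyCount, Nat.card_eq_fintype_card]

def copyEquivEmbedding (H : SimpleGraph W) :
    H.Copy G ≃ {f : W ↪ V // ∀ ⦃a b⦄, H.Adj a b → G.Adj (f a) (f b)} where
  toFun c := ⟨c.toEmbedding, fun _ _ h => c.toHom.map_adj h⟩
  invFun f := ⟨⟨f.1, fun h => f.2 h⟩, f.1.injective⟩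

lemma labelledCopyCount_eq_card_filter (H : SimpleGraph W) :
    G.labelledCopyCount H = #{f : W ↪ V | ∀ ⦃a b⦄, H.Adj a b → G.Adj (f a) (f b)} := by
  rw [labelledCopyCount_eq_natCard, Nat.card_congr (copyEquivEmbedding H),
    Nat.card_eq_fintype_card, Fintype.card_subtype]

end LabelledCopyCount

end SimpleGraph

namespace Finsupp
open Module

variable {R α : Type*} [Ring R] [StrongRankCondition R]

lemma finrank_supported_self {s : Set α} (hs : s.Finite) :
    finrank R (supported R R s) = s.ncard := by
  have := hs.fintype
  rw [(supportedEquivFinsupp s).finrank_eq, finrank_finsupp_self, Set.ncard_eq_toFinset_card',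
    Set.toFinset_card]

lemma finrank_le_ncard_of_le_supported {s : Set α} (hs : s.Finite) {N : Submodule R (α →₀ R)}
    (hN : N ≤ supported R R s) : finrank R N ≤ s.ncard := by
  have := hs.fintype
  have : Module.Finite R (supported R R s) := .equiv (supportedEquivFinsupp s).symm
  exact (Submodule.finrank_mono hN).trans_eq (finrank_supported_self hs)

lemma ncard_le_finrank_of_supported_le {s t : Set α} (hs : s.Finite) (ht : t.Finite)
    {N : Submodule R (α →₀ R)} (hsN : supported R R s ≤ N) (hNt : N ≤ supported R R t) :
    s.ncard ≤ finrank R N := by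
  have := ht.fintype
  have : Module.Finite R (supported R R t) := .equiv (supportedEquivFinsupp t).symm
  rw [← finrank_supported_self (R := R) hs]
  exact finrank_le_finrank_of_rank_le_rank (by simpa using Submodule.rank_mono hsN)
    ((Submodule.rank_mono hNt).trans_lt (rank_lt_aleph0 R _))

end Finsupp

namespace SimpleGraph

variable {G : SimpleGraph V}

lemma mlen_eq_of_isChain_adj : ∀ {l : List V}, l.IsChain G.Adj → mlen G l = (l.length - 1 : ℕ)
  | [], _ | [_], _ => by simp [mlen]
  | a :: b :: t, h => by
    rw [List.isChain_cons_cons] at h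
    rw [mlen, mlen_eq_of_isChain_adj h.2, edist_eq_one_iff_adj.mpr h.1]
    simp [add_comm]

lemma isChain_adj_of_mlen_le : ∀ {l : List V}, IsTrailList G l →
    mlen G l ≤ (l.length - 1 : ℕ) → l.IsChain G.Adj
  | [], _, _ | [_], _, _ => by simp
  | a :: b :: t, h, hm => by
    obtain ⟨⟨hne, -⟩, htrail⟩ := List.isChain_cons_cons.mp h
    have hab : 1 ≤ G.edist a b := Order.one_le_iff_pos.mpr (edist_pos_of_ne hne)
    simp only [mlen, List.length_cons, Nat.add_sub_cancel, Nat.cast_add, Nat.cast_one] at hm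
    have htail : mlen G (b :: t) ≤ t.length := by
      have := (add_le_add hab le_rfl).trans (hm.trans_eq (add_comm _ _))
      exact (ENat.add_le_add_iff_left ENat.one_ne_top).mp this
    have hchain := isChain_adj_of_mlen_le htrail
      (by simpa only [List.length_cons, Nat.add_sub_cancel])
    rw [mlen_eq_of_isChain_adj hchain] at hm
    have hab' : G.edist a b ≤ 1 := by
      simp only [List.length_cons, Nat.add_sub_cancel] at hm
      exact (ENat.add_le_add_iff_right (ENat.natCast_ne_top _)).mp (hm.trans_eq (add_comm _ _))
    exact List.isChain_cons_cons.mpr ⟨edist_eq_one_iff_adj.mp (hab'.antisymm hab), hchain⟩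

lemma mem_etrails_self_iff {k : ℕ} {l : List V} :
    l ∈ etrails G k k ↔ l.length = k + 1 ∧ l.IsChain G.Adj ∧ l.Nodup := by
  simp only [etrails, trails, Set.mem_ofPred_eq]
  constructor
  · rintro ⟨⟨hlen, htrail, hm⟩, hnd⟩
    exact ⟨hlen, isChain_adj_of_mlen_le htrail (by simp [hm, hlen]), hnd⟩
  · rintro ⟨hlen, hchain, hnd⟩
    refine ⟨⟨hlen, hchain.imp fun _ _ h => ⟨h.ne, h.reachable⟩, ?_⟩, hnd⟩
    simp [mlen_eq_of_isChain_adj hchain, hlen]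

lemma ofFn_copy_injective {m : ℕ} {H : SimpleGraph (Fin m)} :
    Function.Injective fun c : H.Copy G => List.ofFn c :=
  fun _ _ h => DFunLike.coe_injective (List.ofFn_injective h)

lemma ofFn_mem_etrails_of_copy {k : ℕ} (c : (pathGraph (k + 1)).Copy G) :
    List.ofFn c ∈ etrails G k k := by
  refine mem_etrails_self_iff.mpr ⟨List.length_ofFn, ?_, List.nodup_ofFn.mpr c.injective⟩
  exact List.isChain_ofFn.mpr fun _ _ => c.toHom.map_adj (pathGraph_adj.mpr (Or.inl rfl))

lemma etrails_self_eq_range (k : ℕ) :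
    etrails G k k = Set.range fun c : (pathGraph (k + 1)).Copy G => List.ofFn c := by
  refine (Set.range_subset_iff.mpr ofFn_mem_etrails_of_copy).antisymm' fun l hl => ?_
  obtain ⟨hlen, hchain, hnd⟩ := mem_etrails_self_iff.mp hl
  have hadj : ∀ i j : Fin (k + 1), i.val + 1 = j.val → G.Adj l[i] l[j] := by
    rintro ⟨i, _⟩ ⟨j, _⟩ (rfl : i + 1 = j)
    exact List.isChain_iff_getElem.mp hchain i (by omega)
  refine ⟨⟨⟨fun i => l[i], fun {i j} h => ?_⟩, fun i j h => ?_⟩, ?_⟩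
  · rcases pathGraph_adj.mp h with h | h
    exacts [hadj i j h, (hadj j i h).symm]
  · exact Fin.ext (hnd.getElem_inj_iff.mp h)
  · exact List.ext_getElem (by simp [hlen]) fun _ _ _ => by rw [List.getElem_ofFn]; rfl

lemma bdryElt_eq_zero_of_isChain_eraseIdx {l : List V}
    (h : ∀ i, 0 < i → i < l.length - 1 → (l.eraseIdx i).IsChain G.Adj) :
    bdryElt G (l.length - 1) l = 0 := by
  refine Finset.sum_eq_zero fun i hi => if_neg ?_
  obtain ⟨h0, hi⟩ := Finset.mem_Ioo.mp hi
  rw [mlen_eq_of_isChain_adj (h i h0 hi), List.length_eraseIdx_of_lt (by omega), Nat.cast_inj]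
  omega

lemma isChain_eraseIdx_ofFn {m : ℕ} (c : (pathSquareGraph m).Copy G) (i : ℕ) :
    ((List.ofFn c).eraseIdx i).IsChain G.Adj := by
  refine List.isChain_iff_getElem.mpr fun j hj => ?_
  simp only [List.getElem_eraseIdx, List.getElem_ofFn]
  split_ifs <;>
    first
    | omega
    | exact c.toHom.map_adj (pathSquareGraph_adj.mpr (by simp only [ne_eq, Fin.ext_iff]; omega))

lemma single_ofFn_mem_EMHkk {k : ℕ} (c : (pathSquareGraph (k + 1)).Copy G) :
    Finsupp.single (List.ofFn c) 1 ∈ EMHkk G k := by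
  refine ⟨Finsupp.single_mem_supported ℤ 1 (ofFn_mem_etrails_of_copy
    (c.comp (Copy.ofLE _ _ (pathGraph_eq_distGraph_one _ ▸ le_sup_left)))), ?_⟩
  change bdry G k (Finsupp.single _ 1) = 0
  rw [bdry, Finsupp.lsum_single, LinearMap.toSpanSingleton_apply, one_smul]
  simpa using bdryElt_eq_zero_of_isChain_eraseIdx fun i _ _ => isChain_eraseIdx_ofFn c i

variable [Fintype V]

lemma emBetti_le_labelledCopyCount (k : ℕ) :
    emBetti G k ≤ G.labelledCopyCount (pathGraph (k + 1)) := by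
  have hfin : (etrails G k k).Finite := etrails_self_eq_range k ▸ Set.finite_range _
  refine (Finsupp.finrank_le_ncard_of_le_supported hfin inf_le_left).trans_eq ?_
  rw [labelledCopyCount_eq_natCard, etrails_self_eq_range,
    Set.ncard_range_of_injective ofFn_copy_injective]

lemma labelledCopyCount_le_emBetti (k : ℕ) :
    G.labelledCopyCount (pathSquareGraph (k + 1)) ≤ emBetti G k := by
  rw [labelledCopyCount_eq_natCard, ← Set.ncard_range_of_injective ofFn_copy_injective]
  refine Finsupp.ncard_le_finrank_of_supported_le (Set.finite_range _)
    (etrails_self_eq_range k ▸ Set.finite_range _) ?_ inf_le_left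
  rw [Finsupp.supported_eq_span_single, Submodule.span_le]
  rintro _ ⟨_, ⟨c, rfl⟩, rfl⟩
  exact single_ofFn_mem_EMHkk c

end SimpleGraph

section ErdosRenyi
open Finset

variable {n : ℕ} {q : ℝ≥0∞} {hq : q ≤ 1}

instance : IsProbabilityMeasure (erMeasure n q hq) := by
  unfold erMeasure; infer_instance

lemma erMeasure_setOf_forall_eq_true (s : Set (Sym2 (Fin n))) :
    erMeasure n q hq {ω | ∀ e ∈ s, ω e = true} = q ^ s.ncard := by
  have hset : {ω : Sym2 (Fin n) → Bool | ∀ e ∈ s, ω e = true} =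
      Set.univ.pi fun e => if e ∈ s then {true} else Set.univ := by
    ext ω
    simp only [Set.mem_ofPred_eq, Set.mem_pi, Set.mem_univ, true_implies]
    exact forall_congr' fun e => by split_ifs with h <;> simp [h]
  rw [erMeasure, hset, Measure.pi_pi]
  have hcoord : ∀ e, (PMF.ofFintype (fun b => cond b q (1 - q)) (by simp [hq])).toMeasure
      (if e ∈ s then {true} else Set.univ) = if e ∈ s then q else 1 := fun e => by
    split_ifs
    · simp
    · exact measure_univ
  simp_rw [hcoord, ← Set.mem_toFinset (s := s)]
  rw [prod_ite_mem, univ_inter, prod_const, Set.ncard_eq_toFinset_card']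

lemma erGraph_adj {ω : Sym2 (Fin n) → Bool} {u v : Fin n} (huv : u ≠ v) :
    (erGraph ω).Adj u v ↔ ω s(u, v) = true := by
  rw [erGraph, SimpleGraph.fromRel_adj, Sym2.eq_swap (a := v)]
  simp [huv]

variable {W : Type*} [Fintype W]

lemma labelledCopyCount_erGraph (H : SimpleGraph W) (ω : Sym2 (Fin n) → Bool) :
    (erGraph ω).labelledCopyCount H =
      #{f : W ↪ Fin n | ∀ e ∈ Sym2.map f '' H.edgeSet, ω e = true} := by
  rw [SimpleGraph.labelledCopyCount_eq_card_filter]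
  congr! 3 with f
  simp only [Set.forall_mem_image]
  constructor
  · intro h e he
    induction e using Sym2.ind with | _ a b => ?_
    exact (erGraph_adj (f.injective.ne he.ne)).mp (h he)
  · exact fun h a b hab => (erGraph_adj (f.injective.ne hab.ne)).mpr (@h s(a, b) hab)

lemma integral_labelledCopyCount_erGraph (H : SimpleGraph W) :
    ∫ ω, ((erGraph ω).labelledCopyCount H : ℝ) ∂erMeasure n q hq =
      n.descFactorial (Fintype.card W) * q.toReal ^ H.edgeSet.ncard := by
  have hcount : ∀ ω : Sym2 (Fin n) → Bool, ((erGraph ω).labelledCopyCount H : ℝ) =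
      ∑ f : W ↪ Fin n, {ω | ∀ e ∈ Sym2.map f '' H.edgeSet, ω e = true}.indicator 1 ω := by
    intro ω
    rw [labelledCopyCount_erGraph, card_filter]
    push_cast
    simp only [Set.indicator_apply, Set.mem_ofPred_eq, Pi.one_apply]
  have hevent : ∀ f : W ↪ Fin n,
      (erMeasure n q hq).real {ω | ∀ e ∈ Sym2.map f '' H.edgeSet, ω e = true} =
        q.toReal ^ H.edgeSet.ncard := by
    intro f
    rw [measureReal_def, erMeasure_setOf_forall_eq_true, ENNReal.toReal_pow,
      Set.ncard_image_of_injective _ (Sym2.map.injective f.injective)]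
  simp_rw [hcount]
  rw [integral_finsetSum _ fun f _ => Integrable.of_finite]
  simp_rw [integral_indicator_one (Set.toFinite _).measurableSet, hevent]
  rw [sum_const, card_univ, Fintype.card_embedding_eq, Fintype.card_fin, nsmul_eq_mul]

lemma descFactorial_mul_pow_le_integral_emBetti (k : ℕ) :
    n.descFactorial (k + 1) * q.toReal ^ (2 * k - 1) ≤
      ∫ ω, (emBetti (erGraph ω) k : ℝ) ∂erMeasure n q hq := by
  calc _ = ∫ ω, ((erGraph ω).labelledCopyCount (SimpleGraph.pathSquareGraph (k + 1)) : ℝ)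
          ∂erMeasure n q hq := by
        rw [integral_labelledCopyCount_erGraph, Fintype.card_fin,
          SimpleGraph.ncard_edgeSet_pathSquareGraph]
    _ ≤ _ := integral_mono .of_finite .of_finite fun _ =>
        Nat.cast_le.mpr (SimpleGraph.labelledCopyCount_le_emBetti k)

lemma integral_emBetti_le_descFactorial_mul_pow (k : ℕ) :
    ∫ ω, (emBetti (erGraph ω) k : ℝ) ∂erMeasure n q hq ≤
      n.descFactorial (k + 1) * q.toReal ^ k := by
  calc _ ≤ ∫ ω, ((erGraph ω).labelledCopyCount (SimpleGraph.pathGraph (k + 1)) : ℝ)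
          ∂erMeasure n q hq := integral_mono .of_finite .of_finite fun _ =>
        Nat.cast_le.mpr (SimpleGraph.emBetti_le_labelledCopyCount k)
    _ = _ := by
        rw [integral_labelledCopyCount_erGraph, Fintype.card_fin,
          SimpleGraph.ncard_edgeSet_pathGraph]

end ErdosRenyi

open Filter Topology

lemma tendsto_nhds_one_of_one_sub_le_log_div {p : ℕ → ℝ} (hp1 : ∀ n, p n ≤ 1)
    (hO : ∃ C : ℝ, ∀ᶠ n : ℕ in atTop, 1 - p n ≤ C * (Real.log n / n)) :
    Tendsto p atTop (𝓝 1) := by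
  obtain ⟨C, hC⟩ := hO
  have hlog : Tendsto (fun n : ℕ => Real.log n / n) atTop (𝓝 0) :=
    Real.isLittleO_log_id_atTop.tendsto_div_nhds_zero.comp tendsto_natCast_atTop_atTop
  have hsub : Tendsto (fun n => 1 - p n) atTop (𝓝 0) :=
    tendsto_of_tendsto_of_tendsto_of_le_of_le' tendsto_const_nhds (by simpa using hlog.const_mul C)
      (.of_forall fun n => sub_nonneg.mpr (hp1 n)) hC
  simpa using (tendsto_const_nhds (x := (1 : ℝ))).sub hsub

theorem er_expected_betti_asymptotics_general (k : ℕ) (p : ℕ → ℝ) (hp1 : ∀ n, p n ≤ 1)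
    (hO : ∃ C : ℝ, ∀ᶠ n : ℕ in Filter.atTop, 1 - p n ≤ C * (Real.log n / n)) :
    Filter.Tendsto
      (fun n : ℕ =>
        (∫ ω, (emBetti (erGraph ω) k : ℝ)
            ∂ erMeasure n (ENNReal.ofReal (p n)) (ENNReal.ofReal_le_one.mpr (hp1 n))) /
          ((n : ℝ) ^ (k + 1) * p n ^ (2 * k - 1)))
      Filter.atTop (nhds 1) := by
  have hp : Tendsto p atTop (𝓝 1) := tendsto_nhds_one_of_one_sub_le_log_div hp1 hO
  have hdesc : Tendsto (fun n : ℕ => (n.descFactorial (k + 1) : ℝ) / (n : ℝ) ^ (k + 1)) atTop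
      (𝓝 1) :=
    (Asymptotics.isEquivalent_iff_tendsto_one ((eventually_ne_atTop 0).mono fun n hn =>
      pow_ne_zero _ (Nat.cast_ne_zero.mpr hn))).mp (isEquivalent_descFactorial (k + 1))
  have hbound (j : ℕ) : Tendsto (fun n : ℕ =>
      n.descFactorial (k + 1) * p n ^ j / ((n : ℝ) ^ (k + 1) * p n ^ (2 * k - 1))) atTop (𝓝 1) := by
    simp_rw [mul_div_mul_comm]
    simpa using hdesc.mul ((hp.pow j).div (hp.pow (2 * k - 1)) (by simp))
  have hp_nonneg : ∀ᶠ n in atTop, 0 ≤ p n := hp.eventually (eventually_ge_nhds zero_lt_one)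
  refine tendsto_of_tendsto_of_tendsto_of_le_of_le' (hbound (2 * k - 1)) (hbound k) ?_ ?_ <;>
    filter_upwards [hp_nonneg] with n hn <;>
    refine div_le_div_of_nonneg_right ?_ (mul_nonneg (by positivity) (pow_nonneg hn _))
  · simpa only [ENNReal.toReal_ofReal hn] using
      descFactorial_mul_pow_le_integral_emBetti (hq := ENNReal.ofReal_le_one.mpr (hp1 n)) k
  · simpa only [ENNReal.toReal_ofReal hn] using
      integral_emBetti_le_descFactorial_mul_pow (hq := ENNReal.ofReal_le_one.mpr (hp1 n)) k

/-- Theorem 4.6: fix `k ≥ 1` and a sequence `(p_n)` in `(0,1]` with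
`1 - p_n = O(ln n / n)`.  Then `E[β_{k,k}(G(n,p_n))] / (n^{k+1} p_n^{2k-1}) → 1`. -/
theorem er_expected_betti_asymptotics (k : ℕ) (hk : 1 ≤ k) (p : ℕ → ℝ)
    (hp0 : ∀ n, 0 < p n) (hp1 : ∀ n, p n ≤ 1)
    (hO : ∃ C : ℝ, ∀ᶠ n : ℕ in Filter.atTop, 1 - p n ≤ C * (Real.log n / n)) :
    Filter.Tendsto
      (fun n : ℕ =>
        (∫ ω, (emBetti (erGraph ω) k : ℝ)
            ∂ erMeasure n (ENNReal.ofReal (p n)) (ENNReal.ofReal_le_one.mpr (hp1 n))) /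
          ((n : ℝ) ^ (k + 1) * p n ^ (2 * k - 1)))
      Filter.atTop (nhds 1) :=
  er_expected_betti_asymptotics_general k p hp1 hO
end

section
/- Fix A > 0, an integer k ≥ 1, and a real r with 0 < r < √A/2. Let G(n,r,A) be the random geometric graph on the flat torus T²_A with n i.i.d. uniform points and radius r. Then lim_{n→∞} E[β_{k,k}(G(n,r,A))] / (n^{k+1}·r^{2k}) = (π/A)^k, where β_{k,k}(G) is the rank of the eulerian magnitude homology group EMH_{k,k}(G). -/
open scoped Classical

variable {V : Type*}

open MeasureTheory
open scoped ENNReal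

/-- The flat-torus distance on `ℝ²` for the torus `T²_A = ℝ²/(√A·ℤ²)`:
`d_T(x,y) = min_{w ∈ √A·ℤ²} ‖x - y - w‖` (Euclidean norm). -/
noncomputable def torusDist (A : ℝ) (x y : EuclideanSpace ℝ (Fin 2)) : ℝ :=
  ⨅ w : ℤ × ℤ, ‖x - y - Real.sqrt A • (WithLp.equiv 2 (Fin 2 → ℝ)).symm ![(w.1 : ℝ), (w.2 : ℝ)]‖

/-- The fundamental domain `[0,√A)²` of the torus `T²_A`. -/
def torusBox (A : ℝ) : Set (EuclideanSpace ℝ (Fin 2)) :=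
  {x | ∀ i, x i ∈ Set.Ico (0 : ℝ) (Real.sqrt A)}

/-- The uniform (normalized Haar) probability measure on `T²_A`, realized as the
normalized Lebesgue measure on the fundamental domain `[0,√A)²`. -/
noncomputable def torusUnif (A : ℝ) : Measure (EuclideanSpace ℝ (Fin 2)) :=
  (ENNReal.ofReal A)⁻¹ • volume.restrict (torusBox A)

/-- The random geometric graph on `n` sampled points of `T²_A` with radius `ρ`:
distinct `i, j` are adjacent iff `d_T(p_i, p_j) ≤ ρ`. -/
noncomputable def rggGraph (A ρ : ℝ) {n : ℕ} (P : Fin n → EuclideanSpace ℝ (Fin 2)) :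
    SimpleGraph (Fin n) :=
  SimpleGraph.fromRel fun i j => torusDist A (P i) (P j) ≤ ρ

/-- The law of `n` i.i.d. uniform points on `T²_A`. -/
noncomputable def rggSample (A : ℝ) (n : ℕ) :
    Measure (Fin n → EuclideanSpace ℝ (Fin 2)) :=
  Measure.pi fun _ => torusUnif A

/-!
On the first diagonal the eulerian generators `ET_{k,k}(G)` are exactly the ordered paths with
`k` edges, and the differential takes values in the free group on the `|V|^k` lists of length
`k`; by rank–nullity, `#ET_{k,k}(G) - |V|^k ≤ β_{k,k}(G) ≤ #ET_{k,k}(G)`. Since `r < √A/2`, the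
lattice translates of a disc of radius `r` are disjoint, so the torus ball, cut along the
fundamental square, reassembles into one disc and has probability `πr²/A`; revealing the points of an injective `(k+1)`-tuple one at a time, the tuple
is a path with probability `(πr²/A)^k`. So `E[#ET_{k,k}] = n(n-1)⋯(n-k)·(πr²/A)^k`, and the
error `n^k` is negligible after dividing by `n^{k+1}`.
-/

open Function

section Trails

variable {G : SimpleGraph V}

lemma length_le_mlen : ∀ {a : V} {t : List V}, IsTrailList G (a :: t) →
    (t.length : ℕ∞) ≤ mlen G (a :: t)
  | _, [], _ => by simp
  | a, b :: t, h => by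
    obtain ⟨⟨hab, -⟩, ht⟩ := List.isChain_cons_cons.mp h
    have hdist : 1 ≤ G.edist a b := Order.one_le_iff_pos.mpr (SimpleGraph.edist_pos_of_ne hab)
    calc ((t.length + 1 : ℕ) : ℕ∞) = 1 + t.length := by push_cast; exact add_comm _ _
      _ ≤ G.edist a b + mlen G (b :: t) := add_le_add hdist (length_le_mlen ht)

lemma ENat.add_eq_natCast_add_one_iff {d m : ℕ∞} {n : ℕ} (hd : 1 ≤ d)
    (hm : (n : ℕ∞) ≤ m) :
    d + m = (n + 1 : ℕ) ↔ d = 1 ∧ m = n := by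
  induction d using ENat.recTopCoe with
  | top => simpa using (ENat.natCast_ne_top (n + 1)).symm
  | coe d =>
    induction m using ENat.recTopCoe with
    | top => simpa using (ENat.natCast_ne_top (n + 1)).symm
    | coe m =>
      norm_cast at hd hm ⊢
      omega

/-- On a trail every step has length at least one, so the length is the number of steps
exactly when every step is an edge. -/
lemma mlen_eq_length_sub_one_iff : ∀ {l : List V}, IsTrailList G l →
    (mlen G l = (l.length - 1 : ℕ) ↔ l.IsChain G.Adj)
  | [], _ => by simp [mlen]
  | [_], _ => by simp [mlen]
  | a :: b :: t, h => by
    obtain ⟨⟨hab, -⟩, ht⟩ := List.isChain_cons_cons.mp h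
    have hdist : 1 ≤ G.edist a b := Order.one_le_iff_pos.mpr (SimpleGraph.edist_pos_of_ne hab)
    have hrest := length_le_mlen ht
    rw [List.isChain_cons_cons, ← mlen_eq_length_sub_one_iff ht,
      ← SimpleGraph.edist_eq_one_iff_adj]
    simp only [mlen, List.length_cons, Nat.add_sub_cancel]
    exact ENat.add_eq_natCast_add_one_iff hdist hrest

def pathTuples (G : SimpleGraph V) (k : ℕ) : Set (Fin (k + 1) → V) :=
  {f | Injective f ∧ ∀ j : Fin k, G.Adj (f j.castSucc) (f j.succ)}

lemma List.isChain_ofFn_succ {α : Type*} {k : ℕ} {r : α → α → Prop}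
    {f : Fin (k + 1) → α} :
    (List.ofFn f).IsChain r ↔ ∀ j : Fin k, r (f j.castSucc) (f j.succ) := by
  rw [List.isChain_ofFn, Fin.forall_iff]
  exact forall_congr' fun i => ⟨fun h hi => h (by omega), fun h hi => h (by omega)⟩

lemma etrails_self_eq_image_ofFn (G : SimpleGraph V) (k : ℕ) :
    etrails G k k = List.ofFn '' pathTuples G k := by
  ext l
  constructor
  · rintro ⟨⟨hlen, htrail, hmlen⟩, hnodup⟩
    obtain ⟨f, rfl⟩ : ∃ f : Fin (k + 1) → V, List.ofFn f = l :=
      ⟨fun i => l[i.val], List.ext_getElem (by simp [hlen]) fun _ _ _ => List.getElem_ofFn ..⟩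
    have hchain := (mlen_eq_length_sub_one_iff htrail).mp (by simpa using hmlen)
    exact ⟨f, ⟨List.nodup_ofFn.mp hnodup, List.isChain_ofFn_succ.mp hchain⟩, rfl⟩
  · rintro ⟨f, ⟨hinj, hadj⟩, rfl⟩
    have hchain : (List.ofFn f).IsChain G.Adj := List.isChain_ofFn_succ.mpr hadj
    have htrail : IsTrailList G (List.ofFn f) := hchain.imp fun _ _ h => ⟨h.ne, h.reachable⟩
    refine ⟨⟨by simp, htrail, ?_⟩, List.nodup_ofFn.mpr hinj⟩
    simpa using (mlen_eq_length_sub_one_iff htrail).mpr hchain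

lemma ncard_etrails_self (G : SimpleGraph V) (k : ℕ) :
    (etrails G k k).ncard = (pathTuples G k).ncard := by
  rw [etrails_self_eq_image_ofFn, Set.ncard_image_of_injective _ List.ofFn_injective]

end Trails

section Rank

open Module

universe u in
lemma finrank_le_finrank_ker_add_of_range_le {R N : Type*} {M : Type u} [Ring R]
    [StrongRankCondition R] [HasRankNullity.{u} R]
    [AddCommGroup M] [Module R M] [AddCommGroup N] [Module R N] [Module.Finite R M]
    (f : M →ₗ[R] N) {T : Submodule R N} [Module.Finite R T] (hT : LinearMap.range f ≤ T) :
    finrank R M ≤ finrank R (LinearMap.ker f) + finrank R T := by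
  rw [← (LinearMap.ker f).finrank_quotient_add_finrank, f.quotKerEquivRange.finrank_eq]
  have := Submodule.finrank_mono hT
  omega

lemma Finsupp.moduleFinite_supported {R : Type*} [Semiring R] {α : Type*} {s : Set α}
    (hs : s.Finite) :
    Module.Finite R (Finsupp.supported R R s) :=
  have := hs.to_subtype
  Module.Finite.equiv (Finsupp.supportedEquivFinsupp s).symm

lemma Finsupp.finrank_supported {R : Type*} [Ring R] [StrongRankCondition R] {α : Type*}
    {s : Set α} (hs : s.Finite) : finrank R (Finsupp.supported R R s) = s.ncard := by
  have := hs.fintype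
  rw [(Finsupp.supportedEquivFinsupp s).finrank_eq, finrank_finsupp_self,
    ← Nat.card_eq_fintype_card, Nat.card_coe_set_eq]

lemma bdry_mem_supported_length {G : SimpleGraph V} {k : ℕ} {x : List V →₀ ℤ}
    (hx : x ∈ EMC G k k) :
    bdry G k x ∈ Finsupp.supported ℤ ℤ {l : List V | l.length = k} := by
  rw [bdry, Finsupp.lsum_apply]
  refine Submodule.sum_mem _ fun l hl => Submodule.smul_mem _ _ ?_
  have hlen : l.length = k + 1 := ((Finsupp.mem_supported ℤ x).mp hx hl).1.1
  refine Submodule.sum_mem _ fun i hi => ?_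
  have hi : i < l.length := by rw [Finset.mem_Ioo] at hi; omega
  have hlen' : (l.eraseIdx i).length = k := by simp [List.length_eraseIdx_of_lt hi, hlen]
  split_ifs
  · exact Submodule.smul_mem _ _ (Finsupp.single_mem_supported ℤ 1 hlen')
  · exact Submodule.zero_mem _

lemma EMHkk_le_EMC (G : SimpleGraph V) (k : ℕ) : EMHkk G k ≤ EMC G k k :=
  inf_le_left

variable [Fintype V]

lemma List.ncard_length_eq (m : ℕ) : {l : List V | l.length = m}.ncard = Fintype.card V ^ m := by
  rw [← Nat.card_coe_set_eq]
  show Nat.card (List.Vector V m) = _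
  rw [Nat.card_eq_fintype_card, card_vector]

lemma finite_etrails (G : SimpleGraph V) (k ℓ : ℕ) : (etrails G k ℓ).Finite :=
  (List.finite_length_eq V (k + 1)).subset fun _ hl => hl.1.1

instance (G : SimpleGraph V) (k ℓ : ℕ) : Module.Finite ℤ (EMC G k ℓ) :=
  Finsupp.moduleFinite_supported (finite_etrails G k ℓ)

lemma finrank_EMC (G : SimpleGraph V) (k ℓ : ℕ) :
    finrank ℤ (EMC G k ℓ) = (etrails G k ℓ).ncard :=
  Finsupp.finrank_supported (finite_etrails G k ℓ)

lemma emBetti_le_ncard_etrails (G : SimpleGraph V) (k : ℕ) :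
    emBetti G k ≤ (etrails G k k).ncard :=
  finrank_EMC G k k ▸ Submodule.finrank_mono (EMHkk_le_EMC G k)

/-- The differential lands in the span of the `|V|^k` lists of length `k`, so rank–nullity bounds
the number of generators by the rank of the kernel plus `|V|^k`. -/
lemma ncard_etrails_le_emBetti_add (G : SimpleGraph V) (k : ℕ) :
    (etrails G k k).ncard ≤ emBetti G k + Fintype.card V ^ k := by
  have := Finsupp.moduleFinite_supported (R := ℤ) (List.finite_length_eq V k)
  have hker : LinearMap.ker ((bdry G k).domRestrict (EMC G k k)) =
      (EMHkk G k).comap (EMC G k k).subtype := by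
    rw [LinearMap.ker_domRestrict, EMHkk, Submodule.comap_inf, Submodule.comap_subtype_self,
      top_inf_eq]
  have hrange : LinearMap.range ((bdry G k).domRestrict (EMC G k k)) ≤
      Finsupp.supported ℤ ℤ {l : List V | l.length = k} := by
    rintro _ ⟨x, rfl⟩
    exact bdry_mem_supported_length x.2
  have := finrank_le_finrank_ker_add_of_range_le _ hrange
  rwa [hker, (Submodule.comapSubtypeEquivOfLe (EMHkk_le_EMC G k)).finrank_eq, finrank_EMC,
    Finsupp.finrank_supported (List.finite_length_eq V k), List.ncard_length_eq] at this

end Rank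

section ChainProbability

open MeasureTheory Finset

variable {α : Type*} [MeasurableSpace α] {μ : Measure α} [IsProbabilityMeasure μ]

lemma measurePreserving_comp_pi_of_injective {ι κ : Type*} [Fintype ι] [Fintype κ]
    {f : κ → ι} (hf : Injective f) :
    MeasurePreserving (fun P : ι → α => P ∘ f) (Measure.pi fun _ => μ)
      (Measure.pi fun _ => μ) := by
  refine ⟨by fun_prop, (Measure.pi_eq fun t ht => ?_).symm⟩
  have hpre : (fun P : ι → α => P ∘ f) ⁻¹' Set.univ.pi t =
      Set.univ.pi (extend f t fun _ => Set.univ) := by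
    ext P
    simp only [Set.mem_preimage, Set.mem_univ_pi, comp_apply]
    refine ⟨fun h i => ?_, fun h j => by simpa [hf.extend_apply] using h (f j)⟩
    by_cases hi : ∃ j, f j = i
    · obtain ⟨j, rfl⟩ := hi
      simpa [hf.extend_apply] using h j
    · simp [extend_apply' _ _ _ hi]
  rw [Measure.map_apply (by fun_prop) (.univ_pi ht), hpre, Measure.pi_pi]
  exact (Fintype.prod_of_injective f hf _ _ (fun i hi => by simp [extend_apply' _ _ _ hi])
    fun j => by simp [hf.extend_apply]).symm

def chainEvent (s : Set (α × α)) (m : ℕ) : Set (Fin (m + 1) → α) :=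
  {Q | ∀ j : Fin m, (Q j.castSucc, Q j.succ) ∈ s}

variable {s : Set (α × α)}

lemma measurableSet_chainEvent (hs : MeasurableSet s) (m : ℕ) :
    MeasurableSet (chainEvent s m) := by
  simp only [chainEvent, Set.ofPred_forall]
  exact .iInter fun j =>
    (by fun_prop : Measurable fun Q : Fin (m + 1) → α => (Q j.castSucc, Q j.succ)) hs

/-- Conditioning on all but the last point, the last step of the chain has probability `p`
wherever the chain before it is. -/
theorem measure_pi_chainEvent (hs : MeasurableSet s) {p : ℝ≥0∞}
    (hp : ∀ x, μ (Prod.mk x ⁻¹' s) = p) :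
    ∀ m : ℕ, Measure.pi (fun _ : Fin (m + 1) => μ) (chainEvent s m) = p ^ m
  | 0 => by simp [chainEvent]
  | m + 1 => by
    let S : Set (α × (Fin (m + 1) → α)) :=
      {q | q.2 ∈ chainEvent s m ∧ (q.2 (Fin.last m), q.1) ∈ s}
    have hS : MeasurableSet S :=
      (measurable_snd (measurableSet_chainEvent hs m)).inter
        ((by fun_prop : Measurable fun q : α × (Fin (m + 1) → α) => (q.2 (Fin.last m), q.1))
          hs)
    have hpre : chainEvent s (m + 1) =
        MeasurableEquiv.piFinSuccAbove (fun _ => α) (Fin.last (m + 1)) ⁻¹' S := by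
      ext Q
      simp [S, chainEvent, Fin.forall_fin_succ', MeasurableEquiv.piFinSuccAbove_apply, Fin.init]
    have hslice : ∀ Q : Fin (m + 1) → α,
        μ ((·, Q) ⁻¹' S) = (chainEvent s m).indicator (fun _ => p) Q := by
      intro Q
      by_cases hQ : Q ∈ chainEvent s m
      · have : (·, Q) ⁻¹' S = Prod.mk (Q (Fin.last m)) ⁻¹' s := by ext; simp [S, hQ]
        rw [this, hp, Set.indicator_of_mem hQ]
      · simp [S, hQ]
    rw [hpre, (measurePreserving_piFinSuccAbove (fun _ => μ) (Fin.last (m + 1))).measure_preimage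
      hS.nullMeasurableSet, Measure.prod_apply_symm hS, lintegral_congr hslice,
      lintegral_indicator (measurableSet_chainEvent hs m), setLIntegral_const,
      measure_pi_chainEvent hs hp m, pow_succ, mul_comm]

variable {n m : ℕ}

lemma integral_indicator_chainEvent_comp (hs : MeasurableSet s) {p : ℝ≥0∞}
    (hp : ∀ x, μ (Prod.mk x ⁻¹' s) = p) (ι : Fin (m + 1) → Fin n) :
    ∫ P, (if Injective ι ∧ P ∘ ι ∈ chainEvent s m then 1 else 0 : ℝ)
        ∂Measure.pi (fun _ => μ) =
      if Injective ι then (p ^ m).toReal else 0 := by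
  by_cases hι : Injective ι
  · have hmp := measurePreserving_comp_pi_of_injective (μ := μ) hι
    have hE := measurableSet_chainEvent hs m
    have hind : (fun P : Fin n → α =>
        if Injective ι ∧ P ∘ ι ∈ chainEvent s m then (1 : ℝ) else 0) =
        ((· ∘ ι) ⁻¹' chainEvent s m).indicator 1 := by
      ext P
      simp [hι, Set.indicator_apply]
    rw [hind, integral_indicator_one (hmp.measurable hE), measureReal_def,
      hmp.measure_preimage hE.nullMeasurableSet, measure_pi_chainEvent hs hp m, if_pos hι]
  · simp [hι]

lemma integrable_indicator_chainEvent_comp (hs : MeasurableSet s) (ι : Fin (m + 1) → Fin n) :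
    Integrable (fun P => if Injective ι ∧ P ∘ ι ∈ chainEvent s m then (1 : ℝ) else 0)
      (Measure.pi fun _ => μ) := by
  have hE : MeasurableSet {P : Fin n → α | Injective ι ∧ P ∘ ι ∈ chainEvent s m} :=
    (MeasurableSet.const _).inter ((by fun_prop : Measurable fun P : Fin n → α => P ∘ ι)
      (measurableSet_chainEvent hs m))
  refine .of_bound (Measurable.aestronglyMeasurable ?_) 1 (ae_of_all _ fun P => ?_)
  · exact Measurable.ite hE measurable_const measurable_const
  · split_ifs <;> simp

lemma integrable_card_injective_chainEvent (hs : MeasurableSet s) :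
    Integrable (fun P : Fin n → α =>
      (#{ι : Fin (m + 1) → Fin n | Injective ι ∧ P ∘ ι ∈ chainEvent s m} : ℝ))
      (Measure.pi fun _ => μ) := by
  simp only [Finset.natCast_card_filter]
  exact integrable_finsetSum _ fun ι _ => integrable_indicator_chainEvent_comp hs ι

theorem integral_card_injective_chainEvent (hs : MeasurableSet s) {p : ℝ≥0∞}
    (hp : ∀ x, μ (Prod.mk x ⁻¹' s) = p) :
    ∫ P, (#{ι : Fin (m + 1) → Fin n | Injective ι ∧ P ∘ ι ∈ chainEvent s m} : ℝ)
        ∂Measure.pi (fun _ => μ) = n.descFactorial (m + 1) * (p ^ m).toReal := by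
  simp only [Finset.natCast_card_filter]
  rw [integral_finsetSum _ fun ι _ => integrable_indicator_chainEvent_comp hs ι]
  simp only [integral_indicator_chainEvent_comp hs hp, Finset.sum_ite, Finset.sum_const_zero,
    add_zero, Finset.sum_const, nsmul_eq_mul]
  congr
  rw [← Fintype.card_subtype, Fintype.card_congr (Equiv.subtypeInjectiveEquivEmbedding _ _),
    Fintype.card_embedding_eq, Fintype.card_fin, Fintype.card_fin]

end ChainProbability

section Torus

open MeasureTheory Metric Filter

local notation "E²" => EuclideanSpace ℝ (Fin 2)

variable {A : ℝ}

noncomputable def latticePoint (A : ℝ) (w : ℤ × ℤ) : E² :=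
  Real.sqrt A • (WithLp.equiv 2 (Fin 2 → ℝ)).symm ![(w.1 : ℝ), (w.2 : ℝ)]

lemma torusDist_eq_iInf (A : ℝ) (x y : E²) :
    torusDist A x y = ⨅ w, ‖x - y - latticePoint A w‖ := rfl

lemma latticePoint_apply (A : ℝ) (w : ℤ × ℤ) (i : Fin 2) :
    latticePoint A w i = Real.sqrt A * ![(w.1 : ℝ), (w.2 : ℝ)] i := rfl

lemma latticePoint_sub (A : ℝ) (w w' : ℤ × ℤ) :
    latticePoint A (w - w') = latticePoint A w - latticePoint A w' := by
  ext i
  fin_cases i <;> simp [latticePoint_apply] <;> ring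

lemma latticePoint_neg (A : ℝ) (w : ℤ × ℤ) : latticePoint A (-w) = -latticePoint A w := by
  ext i
  fin_cases i <;> simp [latticePoint_apply]

lemma sqrt_mul_norm_le_norm_latticePoint (hA : 0 ≤ A) (w : ℤ × ℤ) :
    Real.sqrt A * ‖w‖ ≤ ‖latticePoint A w‖ := by
  have hsq : ‖latticePoint A w‖ ^ 2 = A * ((w.1 : ℝ) ^ 2 + (w.2 : ℝ) ^ 2) := by
    rw [EuclideanSpace.norm_sq_eq, Fin.sum_univ_two]
    simp [latticePoint_apply, mul_pow, Real.sq_sqrt hA]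
    ring
  rw [← Real.sqrt_sq (norm_nonneg (latticePoint A w)), hsq, Real.sqrt_mul hA,
    Prod.norm_def, Int.norm_eq_abs, Int.norm_eq_abs]
  gcongr
  rcases le_total |(w.1 : ℝ)| |(w.2 : ℝ)| with h | h
  · rw [max_eq_right h]
    exact Real.le_sqrt_of_sq_le (by rw [sq_abs]; nlinarith)
  · rw [max_eq_left h]
    exact Real.le_sqrt_of_sq_le (by rw [sq_abs]; nlinarith)

lemma sqrt_le_dist_latticePoint (hA : 0 ≤ A) {w w' : ℤ × ℤ} (h : w ≠ w') :
    Real.sqrt A ≤ dist (latticePoint A w) (latticePoint A w') := by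
  have hw : 1 ≤ ‖w - w'‖ := by
    by_contra! hlt
    rw [Prod.norm_def, max_lt_iff, Int.norm_eq_abs, Int.norm_eq_abs] at hlt
    exact sub_ne_zero.mpr h (Prod.ext (Int.abs_lt_one_iff.mp (by exact_mod_cast hlt.1))
      (Int.abs_lt_one_iff.mp (by exact_mod_cast hlt.2)))
  rw [dist_eq_norm, ← latticePoint_sub]
  calc Real.sqrt A = Real.sqrt A * 1 := (mul_one _).symm
    _ ≤ Real.sqrt A * ‖w - w'‖ := by gcongr
    _ ≤ _ := sqrt_mul_norm_le_norm_latticePoint hA _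

lemma tendsto_norm_sub_latticePoint (hA : 0 < A) (v : E²) :
    Tendsto (fun w => ‖v - latticePoint A w‖) cofinite atTop := by
  have hnorm : Tendsto (fun w : ℤ × ℤ => ‖w‖) cofinite atTop := by
    rw [← cocompact_eq_cofinite]
    exact tendsto_norm_cocompact_atTop
  refine tendsto_atTop_mono (fun w => ?_) (tendsto_atTop_add_const_right _ (-‖v‖)
    (hnorm.const_mul_atTop (Real.sqrt_pos.2 hA)))
  have := sqrt_mul_norm_le_norm_latticePoint hA.le w
  have := norm_sub_norm_le (latticePoint A w) v
  rw [norm_sub_rev] at this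
  linarith

lemma exists_torusDist_eq (hA : 0 < A) (x y : E²) :
    ∃ w, torusDist A x y = ‖x - y - latticePoint A w‖ := by
  obtain ⟨w₀, hw₀⟩ := (tendsto_norm_sub_latticePoint hA (x - y)).exists_forall_le
  refine ⟨w₀, le_antisymm (ciInf_le ⟨0, ?_⟩ w₀) (le_ciInf hw₀)⟩
  rintro _ ⟨w, rfl⟩
  positivity

lemma torusDist_le_iff (hA : 0 < A) {x y : E²} {ρ : ℝ} :
    torusDist A x y ≤ ρ ↔ ∃ w, ‖x - y - latticePoint A w‖ ≤ ρ := by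
  refine ⟨fun h => ?_, fun ⟨w, hw⟩ => (ciInf_le ⟨0, ?_⟩ w).trans hw⟩
  · obtain ⟨w, hw⟩ := exists_torusDist_eq hA x y
    exact ⟨w, hw ▸ h⟩
  · rintro _ ⟨w, rfl⟩
    positivity

lemma torusDist_comm (A : ℝ) (x y : E²) : torusDist A x y = torusDist A y x := by
  rw [torusDist_eq_iInf, torusDist_eq_iInf, ← (Equiv.neg (ℤ × ℤ)).iInf_comp]
  congr 1
  ext w
  rw [← norm_neg, Equiv.neg_apply, latticePoint_neg]
  congr 1
  abel

lemma measurable_torusDist (A : ℝ) : Measurable fun q : E² × E² => torusDist A q.1 q.2 :=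
  Measurable.iInf fun w => by fun_prop

end Torus

section TorusMeasure

open MeasureTheory Metric Set

local notation "E²" => EuclideanSpace ℝ (Fin 2)

variable {A : ℝ}

lemma measurableSet_torusBox (A : ℝ) : MeasurableSet (torusBox A) := by
  simp only [torusBox, Set.ofPred_forall]
  exact .iInter fun i => (by fun_prop : Measurable fun x : E² => x i) measurableSet_Ico

lemma volume_torusBox (hA : 0 < A) : volume (torusBox A) = ENNReal.ofReal A := by
  have heq : torusBox A = (MeasurableEquiv.toLp 2 (Fin 2 → ℝ)).symm ⁻¹'
      (univ.pi fun _ => Ico 0 (Real.sqrt A)) := by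
    ext x
    simp [torusBox]
  rw [heq, (EuclideanSpace.volume_preserving_symm_measurableEquiv_toLp (Fin 2)).measure_preimage
    (MeasurableSet.univ_pi fun _ => measurableSet_Ico).nullMeasurableSet, volume_pi_pi]
  simp only [Real.volume_Ico, sub_zero, Fin.prod_const]
  rw [← ENNReal.ofReal_pow (Real.sqrt_nonneg A), Real.sq_sqrt hA.le]

lemma isProbabilityMeasure_torusUnif (hA : 0 < A) : IsProbabilityMeasure (torusUnif A) := by
  constructor
  rw [torusUnif, Measure.smul_apply, Measure.restrict_apply_univ, volume_torusBox hA,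
    smul_eq_mul, ENNReal.inv_mul_cancel (by simp [hA]) ENNReal.ofReal_ne_top]

lemma sub_mul_mem_Ico_iff {a t : ℝ} (ha : 0 < a) (z : ℤ) :
    t - a * z ∈ Ico 0 a ↔ z = ⌊t / a⌋ := by
  rw [eq_comm, Int.floor_eq_iff, le_div_iff₀ ha, div_lt_iff₀ ha, mem_Ico]
  constructor <;> rintro ⟨h₁, h₂⟩ <;> constructor <;> linarith

lemma sub_latticePoint_mem_torusBox_iff (hA : 0 < A) {y : E²} {w : ℤ × ℤ} :
    y - latticePoint A w ∈ torusBox A ↔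
      w = (⌊y 0 / Real.sqrt A⌋, ⌊y 1 / Real.sqrt A⌋) := by
  have hsA := Real.sqrt_pos.2 hA
  simp only [torusBox, mem_ofPred_eq, Fin.forall_fin_two, PiLp.sub_apply, latticePoint_apply,
    Matrix.cons_val_zero, Matrix.cons_val_one, sub_mul_mem_Ico_iff hsA, Prod.ext_iff]

theorem torusUnif_setOf_torusDist_le (hA : 0 < A) {r : ℝ} (hr₀ : 0 ≤ r)
    (hr : r < Real.sqrt A / 2) (x : E²) :
    torusUnif A {y | torusDist A x y ≤ r} = ENNReal.ofReal (Real.pi * r ^ 2 / A) := by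
  have hball : {y | torusDist A x y ≤ r} = ⋃ w, closedBall (x - latticePoint A w) r := by
    ext y
    simp only [mem_ofPred_eq, torusDist_le_iff hA, mem_iUnion, mem_closedBall, dist_eq_norm]
    refine exists_congr fun w => ?_
    rw [← norm_neg]
    congr! 2
    abel
  have hballs : Pairwise (Disjoint on fun w => closedBall (x - latticePoint A w) r) := by
    intro w w' h
    apply closedBall_disjoint_closedBall
    rw [dist_sub_left]
    linarith [sqrt_le_dist_latticePoint hA.le h]
  let tile : ℤ × ℤ → Set E² := fun w => (· - latticePoint A w) ⁻¹' torusBox A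
  have htiles : Pairwise (Disjoint on tile) := by
    intro w w' h
    refine disjoint_left.mpr fun y hy hy' => h ?_
    rw [mem_preimage, sub_latticePoint_mem_torusBox_iff hA] at hy hy'
    rw [hy, hy']
  have hcover : ⋃ w, tile w = univ :=
    eq_univ_of_forall fun _ =>
      mem_iUnion.mpr ⟨_, (sub_latticePoint_mem_torusBox_iff hA).mpr rfl⟩
  have htile_meas (w : ℤ × ℤ) : MeasurableSet (tile w) :=
    measurable_sub_const _ (measurableSet_torusBox A)
  have htranslate (w : ℤ × ℤ) :
      (· + latticePoint A w) ⁻¹' (closedBall x r ∩ tile w) =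
        closedBall (x - latticePoint A w) r ∩ torusBox A := by
    ext y
    simp only [tile, mem_inter_iff, mem_preimage, add_sub_cancel_right, mem_closedBall,
      dist_eq_norm]
    rw [show y + latticePoint A w - x = y - (x - latticePoint A w) by abel]
  have hvol : volume ({y | torusDist A x y ≤ r} ∩ torusBox A) = volume (closedBall x r) := by
    calc _ = ∑' w, volume (closedBall (x - latticePoint A w) r ∩ torusBox A) := by
          rw [hball, iUnion_inter, measure_iUnion
            (hballs.mono fun _ _ h => h.mono inter_subset_left inter_subset_left)
            fun _ => measurableSet_closedBall.inter (measurableSet_torusBox A)]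
      _ = ∑' w, volume (closedBall x r ∩ tile w) := by
          simp_rw [← htranslate, measure_preimage_add_right]
      _ = volume (closedBall x r) := by
          rw [← measure_iUnion (htiles.mono fun _ _ h => h.mono inter_subset_right
            inter_subset_right) fun w => measurableSet_closedBall.inter (htile_meas w),
            ← inter_iUnion, hcover, inter_univ]
  have hmeas : MeasurableSet {y | torusDist A x y ≤ r} :=
    hball ▸ .iUnion fun _ => measurableSet_closedBall
  rw [torusUnif, Measure.smul_apply, Measure.restrict_apply hmeas, smul_eq_mul, hvol,
    EuclideanSpace.volume_closedBall_fin_two, ← ENNReal.ofReal_pow hr₀,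
    ← ENNReal.ofReal_mul (by positivity), ENNReal.ofReal_div_of_pos hA, div_eq_mul_inv,
    mul_comm, mul_comm (r ^ 2)]

end TorusMeasure

section RandomGeometricGraph

open MeasureTheory Finset

local notation "E²" => EuclideanSpace ℝ (Fin 2)

lemma measurable_comp_of_measurableSet_adj {Ω V β : Type*} [MeasurableSpace Ω]
    [MeasurableSpace β] [Finite V] {G : Ω → SimpleGraph V}
    (hG : ∀ i j, MeasurableSet {ω | (G ω).Adj i j}) (f : SimpleGraph V → β) :
    Measurable fun ω => f (G ω) := by
  let _ : MeasurableSpace (SimpleGraph V) := ⊤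
  refine measurable_from_top.comp (measurable_to_countable' fun H => ?_)
  have hfiber : G ⁻¹' {H} = ⋂ i, ⋂ j, {ω | (G ω).Adj i j ↔ H.Adj i j} := by
    ext ω
    simp [SimpleGraph.ext_iff, funext_iff]
  rw [hfiber]
  refine .iInter fun i => .iInter fun j => ?_
  by_cases h : H.Adj i j
  · simpa [h] using hG i j
  · simp only [h, iff_false]
    exact (hG i j).compl

variable {A r : ℝ} {n : ℕ}

lemma rggGraph_adj (P : Fin n → E²) (i j : Fin n) :
    (rggGraph A r P).Adj i j ↔ i ≠ j ∧ torusDist A (P i) (P j) ≤ r := by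
  simp [rggGraph, torusDist_comm A (P j)]

lemma measurable_emBetti_rggGraph (A r : ℝ) (n k : ℕ) :
    Measurable fun P : Fin n → E² => (emBetti (rggGraph A r P) k : ℝ) := by
  refine measurable_comp_of_measurableSet_adj (G := fun P => rggGraph A r P) (fun i j => ?_)
    fun G => (emBetti G k : ℝ)
  have hdist : Measurable fun P : Fin n → E² => torusDist A (P i) (P j) :=
    (measurable_torusDist A).comp (f := fun P : Fin n → E² => (P i, P j)) (by fun_prop)
  simp only [rggGraph_adj, Set.ofPred_and]
  exact (MeasurableSet.const _).inter (measurableSet_le hdist measurable_const)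

lemma ncard_etrails_rggGraph (P : Fin n → E²) (k : ℕ) :
    (etrails (rggGraph A r P) k k).ncard =
      #{ι : Fin (k + 1) → Fin n |
        Injective ι ∧ P ∘ ι ∈ chainEvent {q | torusDist A q.1 q.2 ≤ r} k} := by
  rw [ncard_etrails_self, ← Set.ncard_coe_finset]
  congr 1
  ext ι
  rw [mem_coe, mem_filter_univ]
  simp only [pathTuples, chainEvent, rggGraph_adj, Set.mem_ofPred_eq, comp_apply]
  refine and_congr_right fun hι => forall_congr' fun j => and_iff_right ?_
  exact hι.ne (show j.castSucc < j.succ from Fin.castSucc_lt_succ).ne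

theorem integral_emBetti_rggGraph_mem_Icc (hA : 0 < A) (hr₀ : 0 ≤ r) (hr : r < Real.sqrt A / 2)
    (n k : ℕ) :
    ∫ P, (emBetti (rggGraph A r P) k : ℝ) ∂rggSample A n ∈
      Set.Icc (n.descFactorial (k + 1) * (Real.pi * r ^ 2 / A) ^ k - n ^ k)
        (n.descFactorial (k + 1) * (Real.pi * r ^ 2 / A) ^ k) := by
  have := isProbabilityMeasure_torusUnif hA
  have : IsProbabilityMeasure (rggSample A n) := by unfold rggSample; infer_instance
  let s : Set (E² × E²) := {q | torusDist A q.1 q.2 ≤ r}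
  have hs : MeasurableSet s := measurableSet_le (measurable_torusDist A) measurable_const
  let N : (Fin n → E²) → ℝ := fun P =>
    #{ι : Fin (k + 1) → Fin n | Injective ι ∧ P ∘ ι ∈ chainEvent s k}
  have hβN (P : Fin n → E²) : (emBetti (rggGraph A r P) k : ℝ) ≤ N P := by
    have := emBetti_le_ncard_etrails (rggGraph A r P) k
    rw [ncard_etrails_rggGraph] at this
    simp only [N]
    exact_mod_cast this
  have hNβ (P : Fin n → E²) : N P ≤ emBetti (rggGraph A r P) k + n ^ k := by
    have := ncard_etrails_le_emBetti_add (rggGraph A r P) k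
    rw [ncard_etrails_rggGraph, Fintype.card_fin] at this
    simp only [N]
    exact_mod_cast this
  have hN : Integrable N (rggSample A n) := integrable_card_injective_chainEvent hs
  have hβ : Integrable (fun P => (emBetti (rggGraph A r P) k : ℝ)) (rggSample A n) :=
    hN.mono' (measurable_emBetti_rggGraph A r n k).aestronglyMeasurable
      (ae_of_all _ fun P => by simpa using hβN P)
  have hEN : ∫ P, N P ∂rggSample A n = n.descFactorial (k + 1) * (Real.pi * r ^ 2 / A) ^ k := by
    rw [rggSample, integral_card_injective_chainEvent hs
      fun x => torusUnif_setOf_torusDist_le hA hr₀ hr x, ENNReal.toReal_pow,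
      ENNReal.toReal_ofReal (by positivity)]
  constructor
  · have := integral_mono hN (hβ.add (integrable_const _)) hNβ
    rw [integral_add' hβ (integrable_const _), integral_const, hEN] at this
    simp only [probReal_univ, one_smul] at this
    linarith
  · exact hEN ▸ integral_mono hβ hN hβN

end RandomGeometricGraph

section Asymptotics

open Filter Topology

lemma tendsto_div_pow_of_descFactorial_bounds {x : ℕ → ℝ} {c : ℝ} {k : ℕ}
    (hlo : ∀ n, n.descFactorial (k + 1) * c - n ^ k ≤ x n)
    (hhi : ∀ n, x n ≤ n.descFactorial (k + 1) * c) :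
    Tendsto (fun n => x n / n ^ (k + 1)) atTop (𝓝 c) := by
  have hpos : ∀ᶠ n : ℕ in atTop, (0 : ℝ) < n :=
    (eventually_gt_atTop 0).mono fun _ hn => by exact_mod_cast hn
  have hD : Tendsto (fun n : ℕ => (n.descFactorial (k + 1) : ℝ) / n ^ (k + 1)) atTop (𝓝 1) :=
    (Asymptotics.isEquivalent_iff_tendsto_one (hpos.mono fun n hn => by positivity)).mp
      (isEquivalent_descFactorial (k + 1))
  have herr : Tendsto (fun n : ℕ => (n : ℝ) ^ k / n ^ (k + 1)) atTop (𝓝 0) := by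
    refine tendsto_inv_atTop_nhds_zero_nat.congr' (hpos.mono fun n hn => ?_)
    field_simp
    ring
  have hup := hD.mul_const c
  have hdown := hup.sub herr
  rw [one_mul] at hup
  rw [one_mul, sub_zero] at hdown
  refine tendsto_of_tendsto_of_tendsto_of_le_of_le hdown hup (fun n => ?_) (fun n => ?_)
  · calc _ = (n.descFactorial (k + 1) * c - n ^ k) / (n : ℝ) ^ (k + 1) := by ring
      _ ≤ _ := div_le_div_of_nonneg_right (hlo n) (by positivity)
  · calc _ ≤ (n.descFactorial (k + 1) * c) / (n : ℝ) ^ (k + 1) :=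
          div_le_div_of_nonneg_right (hhi n) (by positivity)
      _ = _ := by ring

end Asymptotics

theorem rgg_expected_betti_asymptotics_general (A : ℝ) (hA : 0 < A) (k : ℕ)
    (r : ℝ) (hr0 : 0 < r) (hr1 : r < Real.sqrt A / 2) :
    Filter.Tendsto
      (fun n : ℕ =>
        (∫ P, (emBetti (rggGraph A r P) k : ℝ) ∂ rggSample A n) /
          ((n : ℝ) ^ (k + 1) * r ^ (2 * k)))
      Filter.atTop (nhds ((Real.pi / A) ^ k)) := by
  have hbounds := fun n => integral_emBetti_rggGraph_mem_Icc hA hr0.le hr1 n k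
  have hlim := (tendsto_div_pow_of_descFactorial_bounds (fun n => (hbounds n).1)
    fun n => (hbounds n).2).div_const (r ^ (2 * k))
  have hc : (Real.pi * r ^ 2 / A) ^ k / r ^ (2 * k) = (Real.pi / A) ^ k := by
    rw [pow_mul, ← div_pow]
    congr 1
    field_simp
  rw [hc] at hlim
  simpa only [div_div] using hlim

/-- Theorem 5.9: fix `A > 0`, `k ≥ 1` and a radius `0 < r < √A/2`.
Then `E[β_{k,k}(G(n,r,A))] / (n^{k+1} r^{2k}) → (π/A)^k` as `n → ∞`. -/
theorem rgg_expected_betti_asymptotics (A : ℝ) (hA : 0 < A) (k : ℕ) (hk : 1 ≤ k)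
    (r : ℝ) (hr0 : 0 < r) (hr1 : r < Real.sqrt A / 2) :
    Filter.Tendsto
      (fun n : ℕ =>
        (∫ P, (emBetti (rggGraph A r P) k : ℝ) ∂ rggSample A n) /
          ((n : ℝ) ^ (k + 1) * r ^ (2 * k)))
      Filter.atTop (nhds ((Real.pi / A) ^ k)) :=
  rgg_expected_betti_asymptotics_general A hA k r hr0 hr1
end
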